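/- Let A be an algebra with semisimple automorphism σ with eigenvalue set Λ. Then the Gerstenhaber cup product, bracket and cap product restrict to the eigenvalue components: for λ,μ ∈ Λ, ∪ maps CH^p_λ(A;A)⊗CH^q_μ(A;A) to CH^{p+q}_{λμ}(A;A), {−,−} maps CH^p_λ(A;A)⊗CH^q_μ(A;A) to CH^{p+q−1}_{λμ}(A;A), and ∩ maps CH^λ_p(A;A_σ)⊗CH^q_μ(A;A) to CH^{λμ}_{p−q}(A;A_σ). -/
import Mathlib


/-!
STATEMENT 7.  Let `A` be an algebra with semisimple automorphism `σ` with eigenvalue set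
`Λ`.  Then the Gerstenhaber cup product, bracket and cap product restrict to the
eigenvalue components: for `λ, μ ∈ Λ`,
`∪ : CH^p_λ(A;A) ⊗ CH^q_μ(A;A) → CH^{p+q}_{λμ}(A;A)`,
`{-,-} : CH^p_λ(A;A) ⊗ CH^q_μ(A;A) → CH^{p+q-1}_{λμ}(A;A)`,
`∩ : CH^λ_p(A;A_σ) ⊗ CH^q_μ(A;A) → CH^{λμ}_{p-q}(A;A_σ)`.

Cochains are represented concretely as multilinear maps, with the cup product,
composition product `∘`, Gerstenhaber bracket and cap product characterized by the usual
formulas; chains of `CH_•(A;A_σ)` are represented as in Statement 5 by spanning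
elementary tensors.
-/

open scoped BigOperators

variable {k A : Type*} [Field k] [Ring A] [Algebra k A]

/-- The `μ`-eigenspace `A_μ` of an automorphism `σ` of `A`. -/
def eigsp (σ : A ≃ₐ[k] A) (μ : k) : Submodule k A :=
  Module.End.eigenspace (σ : A →ₗ[k] A) μ

/-- `σ` is semisimple (diagonalizable): `A` is the sum of the eigenspaces of `σ`. -/
def IsSemisimpleAut (σ : A ≃ₐ[k] A) : Prop :=
  (⨆ μ : k, eigsp σ μ) = ⊤

/-- The space `CH^q(A; A)` of Hochschild `q`-cochains of `A`. -/
abbrev HCochain (k : Type*) (A : Type*) [Field k] [Ring A] [Algebra k A] (q : ℕ) :=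
  MultilinearMap k (fun _ : Fin q => A) A

/-- The eigenvalue-`μ` component `CH^q_μ(A;A)` of the Hochschild cochain complex:
cochains `F` with `F(A_{μ_1} ⊗ ⋯ ⊗ A_{μ_q}) ⊆ A_{μ μ_1 ⋯ μ_q}`. -/
def cochainEig (σ : A ≃ₐ[k] A) (μ : k) (q : ℕ) : Submodule k (HCochain k A q) where
  carrier := {F | ∀ (g : Fin q → A) (ν : Fin q → k),
    (∀ t, σ (g t) = ν t • g t) → F g ∈ eigsp σ (μ * ∏ t, ν t)}
  add_mem' := by
    intro F G hF hG g ν hg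
    simpa using add_mem (hF g ν hg) (hG g ν hg)
  zero_mem' := by
    intro g ν hg
    simpa using zero_mem (eigsp _ _)
  smul_mem' := by
    intro c F hF g ν hg
    simpa using Submodule.smul_mem _ c (hF g ν hg)

/-- The eigenvalue-`λ` component `CH^λ_n(A;A_σ)` of the twisted Hochschild chain complex:
the span of elementary tensors of `σ`-eigenvectors whose eigenvalues multiply to `λ`. -/
def chainEig (σ : A ≃ₐ[k] A) {C : ℕ → Type*} [∀ n, AddCommGroup (C n)]
    [∀ n, Module k (C n)]
    (pt : ∀ n, MultilinearMap k (fun _ : Fin (n + 1) => A) (C n))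
    (lam : k) (n : ℕ) : Submodule k (C n) :=
  Submodule.span k {x | ∃ (f : Fin (n + 1) → A) (ν : Fin (n + 1) → k),
    (∀ j, σ (f j) = ν j • f j) ∧ (∏ j, ν j) = lam ∧ x = pt n f}

/-- Insertion of the value of a `q`-cochain `G` at the `i`-th slot of the arguments `g`,
as in the Gerstenhaber composition product `F ∘ G`. -/
def insComp {q p : ℕ} (G : HCochain k A q) (g : Fin (p + q) → A) (i : Fin (p + 1)) :
    Fin (p + 1) → A :=
  fun s =>
    if h1 : (s : ℕ) < (i : ℕ) then g ⟨s, by have := s.isLt; have := i.isLt; omega⟩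
    else if h2 : (s : ℕ) = (i : ℕ) then
      G (fun t => g ⟨(i : ℕ) + (t : ℕ), by have := t.isLt; have := i.isLt; omega⟩)
    else g ⟨(s : ℕ) + q - 1, by have := s.isLt; omega⟩

-- helpers
lemma mem_eigsp {σ : A ≃ₐ[k] A} {a : k} {x : A} : x ∈ eigsp σ a ↔ σ x = a • x := by
  rw [eigsp, Module.End.mem_eigenspace_iff]; rfl

lemma eig_mul {σ : A ≃ₐ[k] A} {a b : k} {x y : A} (hx : x ∈ eigsp σ a)
    (hy : y ∈ eigsp σ b) : x * y ∈ eigsp σ (a * b) := by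
  rw [mem_eigsp] at *
  rw [map_mul, hx, hy, smul_mul_smul_comm]

lemma prod_insComp (p q : ℕ) (mu : k) (ν : Fin (p + (q + 1)) → k) (i : Fin (p + 1)) :
    ∏ s : Fin (p + 1), insComp (mu • MultilinearMap.mkPiAlgebra k (Fin (q + 1)) k) ν i s
      = mu * ∏ t, ν t := by
  classical
  let νb : ℕ → k := fun j => if h : j < p + (q + 1) then ν ⟨j, h⟩ else 1
  have hν : ∀ t : Fin (p + (q + 1)), ν t = νb t := by
    intro t; simp [νb, t.isLt]
  let fI : ℕ → k := fun s =>
    if s < (i : ℕ) then νb s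
    else if s = (i : ℕ) then mu * ∏ t ∈ Finset.range (q + 1), νb ((i : ℕ) + t)
    else νb (s + q)
  have hL : ∀ s : Fin (p + 1),
      insComp (mu • MultilinearMap.mkPiAlgebra k (Fin (q + 1)) k) ν i s = fI s := by
    intro s
    rw [insComp]
    show _ = if (s : ℕ) < (i : ℕ) then νb s
      else if (s : ℕ) = (i : ℕ) then mu * ∏ t ∈ Finset.range (q + 1), νb ((i : ℕ) + t)
      else νb ((s : ℕ) + q)
    split_ifs with h1 h2
    · rw [hν]
    · simp only [MultilinearMap.smul_apply, MultilinearMap.mkPiAlgebra_apply,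
        smul_eq_mul]
      congr 1
      rw [← Fin.prod_univ_eq_prod_range (fun t => νb ((i : ℕ) + t)) (q + 1)]
      exact Finset.prod_congr rfl fun t _ => hν _
    · rw [hν]
      show νb ((s : ℕ) + (q + 1) - 1) = νb ((s : ℕ) + q)
      congr 1 <;> omega
  rw [Finset.prod_congr rfl fun s _ => hL s]
  have key : ∏ s : Fin (p + 1), fI s = ∏ s ∈ Finset.range (p + 1), fI s :=
    Fin.prod_univ_eq_prod_range fI (p + 1)
  rw [key]
  have hip : (i : ℕ) ≤ p := by omega
  have hsplitL : ∏ s ∈ Finset.range (p + 1), fI s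
      = (∏ s ∈ Finset.range (i : ℕ), fI s) *
        ((∏ s ∈ Finset.range 1, fI ((i : ℕ) + s)) *
          ∏ s ∈ Finset.range (p - (i : ℕ)), fI ((i : ℕ) + (1 + s))) := by
    rw [show Finset.range (p + 1)
        = Finset.range ((i : ℕ) + (1 + (p - (i : ℕ)))) from by congr 1; omega,
      Finset.prod_range_add fI (i : ℕ) (1 + (p - (i : ℕ))),
      Finset.prod_range_add (fun s => fI ((i : ℕ) + s)) 1 (p - (i : ℕ))]
  have hR : ∏ t : Fin (p + (q + 1)), ν t = ∏ t ∈ Finset.range (p + (q + 1)), νb t := by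
    rw [Finset.prod_congr rfl fun t _ => hν t]
    exact Fin.prod_univ_eq_prod_range νb (p + (q + 1))
  have hsplitR : ∏ t ∈ Finset.range (p + (q + 1)), νb t
      = (∏ s ∈ Finset.range (i : ℕ), νb s) *
        ((∏ s ∈ Finset.range (q + 1), νb ((i : ℕ) + s)) *
          ∏ s ∈ Finset.range (p - (i : ℕ)), νb ((i : ℕ) + ((q + 1) + s))) := by
    rw [show Finset.range (p + (q + 1))
        = Finset.range ((i : ℕ) + ((q + 1) + (p - (i : ℕ)))) from by congr 1; omega,
      Finset.prod_range_add νb (i : ℕ) ((q + 1) + (p - (i : ℕ))),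
      Finset.prod_range_add (fun s => νb ((i : ℕ) + s)) (q + 1) (p - (i : ℕ))]
  rw [hsplitL, hR, hsplitR, Finset.prod_range_one]
  have e1 : ∀ s ∈ Finset.range (i : ℕ), fI s = νb s := by
    intro s hs; rw [Finset.mem_range] at hs
    show (if s < (i : ℕ) then νb s else _) = νb s
    rw [if_pos hs]
  have e2 : fI ((i : ℕ) + 0) = mu * ∏ t ∈ Finset.range (q + 1), νb ((i : ℕ) + t) := by
    show (if (i : ℕ) + 0 < (i : ℕ) then _ else if (i : ℕ) + 0 = (i : ℕ) then
      mu * ∏ t ∈ Finset.range (q + 1), νb ((i : ℕ) + t) else _) = _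
    rw [if_neg (by omega), if_pos (by omega)]
  have e3 : ∀ s ∈ Finset.range (p - (i : ℕ)),
      fI ((i : ℕ) + (1 + s)) = νb ((i : ℕ) + ((q + 1) + s)) := by
    intro s _
    show (if (i : ℕ) + (1 + s) < (i : ℕ) then _ else if (i : ℕ) + (1 + s) = (i : ℕ)
      then _ else νb ((i : ℕ) + (1 + s) + q)) = _
    rw [if_neg (by omega), if_neg (by omega)]
    congr 1
    omega
  rw [Finset.prod_congr rfl e1, e2, Finset.prod_congr rfl e3]
  ring

/-- For a semisimple automorphism `σ` of `A`, the cup product, the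
Gerstenhaber bracket and the cap product restrict to the eigenvalue components:
`∪ : CH^p_λ ⊗ CH^q_μ → CH^{p+q}_{λμ}`, `{-,-} : CH^p_λ ⊗ CH^q_μ → CH^{p+q-1}_{λμ}`,
`∩ : CH^λ_p(A;A_σ) ⊗ CH^q_μ(A;A) → CH^{λμ}_{p-q}(A;A_σ)`. -/
theorem eigenvalue_components_restrict
    (σ : A ≃ₐ[k] A) (hss : IsSemisimpleAut σ)
    -- the reduced Hochschild chain modules `C n = CH_n(A; A_σ)` (cf. Statement 5):
    (C : ℕ → Type*) [∀ n, AddCommGroup (C n)] [∀ n, Module k (C n)]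
    (pt : ∀ n, MultilinearMap k (fun _ : Fin (n + 1) => A) (C n))
    (hspan : ∀ n, (⊤ : Submodule k (C n)) = Submodule.span k (Set.range fun f => pt n f))
    (hred : ∀ (n) (f : Fin (n + 1) → A) (j : Fin (n + 1)), j ≠ 0 →
      (∃ c : k, f j = algebraMap k A c) → pt n f = 0)
    -- the cup product `(F ∪ G)(a_1,…,a_{p+q}) = F(a_1,…,a_p) G(a_{p+1},…,a_{p+q})`:
    (cup : ∀ p q, HCochain k A p →ₗ[k] HCochain k A q →ₗ[k] HCochain k A (p + q))
    (hcup : ∀ (p q) (F : HCochain k A p) (G : HCochain k A q) (g : Fin (p + q) → A),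
      cup p q F G g
        = F (fun s => g (Fin.castAdd q s)) * G (fun s => g (Fin.natAdd p s)))
    -- the composition product
    -- `(F ∘ G)(a_1,…) = Σ_i (-1)^{(|G|+1) i} F(a_1,…,a_i, G(a_{i+1},…), …)`:
    (circ : ∀ p q, HCochain k A (p + 1) →ₗ[k] HCochain k A q →ₗ[k] HCochain k A (p + q))
    (hcirc : ∀ (p q) (F : HCochain k A (p + 1)) (G : HCochain k A q)
      (g : Fin (p + q) → A),
      circ p q F G g
        = ∑ i : Fin (p + 1), ((-1 : k) ^ ((q + 1) * (i : ℕ))) • F (insComp G g i))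
    -- the Gerstenhaber bracket `{F,G} = F ∘ G - (-1)^{(|F|+1)(|G|+1)} G ∘ F`:
    (br : ∀ p q, HCochain k A (p + 1) →ₗ[k] HCochain k A (q + 1) →ₗ[k]
      HCochain k A (p + q + 1))
    (hbr : ∀ (p q) (F : HCochain k A (p + 1)) (G : HCochain k A (q + 1))
      (g : Fin (p + q + 1) → A),
      br p q F G g
        = circ p (q + 1) F G g
          - ((-1 : k) ^ ((p + 2) * (q + 2))) •
            circ q (p + 1) G F (fun s => g (Fin.cast (by omega) s)))
    -- the cap product `F ∩ (a_0, a_1, …, a_m) = (a_0 F(a_1,…,a_q), a_{q+1}, …, a_m)`: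
    (cap : ∀ q r, HCochain k A q →ₗ[k] C (q + r) →ₗ[k] C r)
    (hcap : ∀ (q r) (F : HCochain k A q) (f : Fin (q + r + 1) → A),
      cap q r F (pt (q + r) f)
        = pt r (fun j =>
            if (j : ℕ) = 0 then
              f 0 * F (fun t => f ⟨(t : ℕ) + 1, by have := t.isLt; omega⟩)
            else f ⟨(j : ℕ) + q, by have := j.isLt; omega⟩)) :
    -- conclusions: all three operations restrict to the eigenvalue components
    (∀ (p q : ℕ) (lam mu : k), eigsp σ lam ≠ ⊥ → eigsp σ mu ≠ ⊥ →
      ∀ (F : HCochain k A p) (G : HCochain k A q),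
        F ∈ cochainEig σ lam p → G ∈ cochainEig σ mu q →
          cup p q F G ∈ cochainEig σ (lam * mu) (p + q)) ∧
    (∀ (p q : ℕ) (lam mu : k), eigsp σ lam ≠ ⊥ → eigsp σ mu ≠ ⊥ →
      ∀ (F : HCochain k A (p + 1)) (G : HCochain k A (q + 1)),
        F ∈ cochainEig σ lam (p + 1) → G ∈ cochainEig σ mu (q + 1) →
          br p q F G ∈ cochainEig σ (lam * mu) (p + q + 1)) ∧
    (∀ (q r : ℕ) (lam mu : k), eigsp σ lam ≠ ⊥ → eigsp σ mu ≠ ⊥ →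
      ∀ (F : HCochain k A q) (x : C (q + r)),
        F ∈ cochainEig σ mu q → x ∈ chainEig σ pt lam (q + r) →
          cap q r F x ∈ chainEig σ pt (lam * mu) r) := by
  classical
  have hmul : ∀ {a b : k} {x y : A}, x ∈ eigsp σ a → y ∈ eigsp σ b →
      x * y ∈ eigsp σ (a * b) := fun hx hy => eig_mul hx hy
  -- pointwise statement for the composition product
  have key : ∀ (p q : ℕ) (lam mu : k) (F : HCochain k A (p + 1))
      (G : HCochain k A (q + 1)),
      F ∈ cochainEig σ lam (p + 1) → G ∈ cochainEig σ mu (q + 1) →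
      ∀ (g : Fin (p + (q + 1)) → A) (ν : Fin (p + (q + 1)) → k),
        (∀ t, σ (g t) = ν t • g t) →
        circ p (q + 1) F G g ∈ eigsp σ (lam * mu * ∏ t, ν t) := by
    intro p q lam mu F G hF hG g ν hν
    rw [hcirc]
    refine sum_mem fun i _ => Submodule.smul_mem _ _ ?_
    set νI : Fin (p + 1) → k :=
      insComp (mu • MultilinearMap.mkPiAlgebra k (Fin (q + 1)) k) ν i with hνI
    have hIns : ∀ s, σ (insComp G g i s) = νI s • insComp G g i s := by
      intro s
      rw [hνI, insComp, insComp]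
      split_ifs with h1 h2
      · exact hν _
      · have hGmem := hG (fun t => g ⟨(i : ℕ) + (t : ℕ),
            by have := t.isLt; have := i.isLt; omega⟩)
          (fun t => ν ⟨(i : ℕ) + (t : ℕ),
            by have := t.isLt; have := i.isLt; omega⟩)
          (fun t => hν _)
        rw [mem_eigsp] at hGmem
        rw [hGmem]
        congr 1
      · exact hν _
    have hFmem := hF (insComp G g i) νI hIns
    rw [hνI, prod_insComp, ← mul_assoc] at hFmem
    exact hFmem
  refine ⟨?_, ?_, ?_⟩
  · -- cup product
    intro p q lam mu _ _ F G hF hG g ν hν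
    have h1 := hF (fun s => g (Fin.castAdd q s)) (fun s => ν (Fin.castAdd q s))
      (fun t => hν _)
    have h2 := hG (fun s => g (Fin.natAdd p s)) (fun s => ν (Fin.natAdd p s))
      (fun t => hν _)
    have h3 := hmul h1 h2
    have heq : (lam * ∏ t, ν (Fin.castAdd q t)) * (mu * ∏ t, ν (Fin.natAdd p t))
        = lam * mu * ∏ t, ν t := by
      rw [Fin.prod_univ_add (f := ν)]
      ring
    rw [hcup]
    rwa [heq] at h3
  · -- Gerstenhaber bracket
    intro p q lam mu _ _ F G hF hG g ν hν
    rw [hbr]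
    refine sub_mem ?_ (Submodule.smul_mem _ _ ?_)
    · exact key p q lam mu F G hF hG g ν hν
    · have h2 := key q p mu lam G F hG hF
        (fun s => g (Fin.cast (by omega) s)) (fun s => ν (Fin.cast (by omega) s))
        (fun t => hν _)
      have heq : (mu * lam * ∏ s : Fin (q + (p + 1)),
          ν (Fin.cast (by omega) s)) = lam * mu * ∏ t, ν t := by
        rw [show ∏ s : Fin (q + (p + 1)), ν (Fin.cast (by omega : q + (p + 1) = p + q + 1) s)
            = ∏ t, ν t from Equiv.prod_comp (finCongr (by omega)) ν]
        ring
      rwa [heq] at h2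
  · -- cap product
    intro q r lam mu _ _ F x hF hx
    suffices h : Submodule.map (cap q r F) (chainEig σ pt lam (q + r))
        ≤ chainEig σ pt (lam * mu) r from h ⟨x, hx, rfl⟩
    rw [chainEig, Submodule.map_span, Submodule.span_le]
    rintro _ ⟨y, ⟨f, ν, hf, hprod, rfl⟩, rfl⟩
    rw [hcap]
    apply Submodule.subset_span
    refine ⟨_, fun j => if (j : ℕ) = 0 then
        ν 0 * (mu * ∏ t : Fin q, ν ⟨(t : ℕ) + 1, by have := t.isLt; omega⟩)
      else ν ⟨(j : ℕ) + q, by have := j.isLt; omega⟩, ?_, ?_, rfl⟩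
    · intro j
      by_cases hj : (j : ℕ) = 0
      · have hj0 : j = 0 := Fin.ext hj
        have hFmem := hF (fun t => f ⟨(t : ℕ) + 1, by have := t.isLt; omega⟩)
          (fun t => ν ⟨(t : ℕ) + 1, by have := t.isLt; omega⟩) (fun t => hf _)
        rw [mem_eigsp] at hFmem
        have h0 : f 0 ∈ eigsp σ (ν 0) := mem_eigsp.mpr (hf 0)
        have := eig_mul h0 (mem_eigsp.mpr hFmem)
        rw [mem_eigsp] at this
        simpa [hj0] using this
      · simp only [if_neg hj]
        exact hf _
    · have hsucc : ∀ j : Fin r, ((j.succ : Fin (r + 1)) : ℕ) ≠ 0 := by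
        intro j; simp
      rw [Fin.prod_univ_succ]
      rw [if_pos (show ((0 : Fin (r + 1)) : ℕ) = 0 from rfl)]
      have e1 : ∀ j : Fin r,
          (if (j : ℕ) + 1 = 0 then
            ν 0 * (mu * ∏ t : Fin q, ν ⟨(t : ℕ) + 1, by have := t.isLt; omega⟩)
          else ν ⟨(j : ℕ) + 1 + q, by have := j.isLt; omega⟩)
          = ν ⟨(j : ℕ) + 1 + q, by have := j.isLt; omega⟩ := by
        intro j; rw [if_neg (by omega)]
      simp only [Fin.val_succ]
      rw [Finset.prod_congr rfl fun j _ => e1 j]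
      have hlam : lam = ν 0 * ((∏ t : Fin q, ν ⟨(t : ℕ) + 1, by have := t.isLt; omega⟩) *
          ∏ j : Fin r, ν ⟨(j : ℕ) + 1 + q, by have := j.isLt; omega⟩) := by
        rw [← hprod, Fin.prod_univ_succ]
        congr 1
        rw [Fin.prod_univ_add (f := fun t : Fin (q + r) => ν t.succ)]
        congr 1
        exact Finset.prod_congr rfl fun t _ => congrArg ν (Fin.ext (by
          show q + (t : ℕ) + 1 = (t : ℕ) + 1 + q; omega))
      rw [hlam]
      ring
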